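/- Let α ∈ (0,1), let l ≥ 1 be an even integer, and let c > 0. Then the equation x^{α-l}(x-1)^l = c has exactly two positive real solutions when c is sufficiently large: one solution ξ₁ ∈ (0,1) and one solution ξ₂ ∈ (1,∞). Moreover, as c → ∞, ξ₁ ~ c^{-1/(l-α)} (that is, ξ₁ c^{1/(l-α)} → 1) and ξ₂ ~ c^{1/α} (that is, ξ₂ c^{-1/α} → 1). -/

import Mathlib

open Real Filter

noncomputable def hf (α : ℝ) (l : ℕ) (x : ℝ) : ℝ := x ^ (α - l) * (x - 1) ^ l

section aux
variable {α : ℝ} {l : ℕ}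

lemma hf_one (hl : 1 ≤ l) : hf α l 1 = 0 := by
  simp [hf, zero_pow (by omega : l ≠ 0)]

lemma hf_eq_left (hle : Even l) (x : ℝ) :
    hf α l x = x ^ (α - l) * (1 - x) ^ l := by
  rw [hf, ← hle.neg_pow (x - 1), neg_sub]

lemma hf_eq_right {x : ℝ} (hx : 0 < x) :
    hf α l x = x ^ α * ((x - 1) / x) ^ l := by
  rw [hf, Real.rpow_sub hx, Real.rpow_natCast, div_mul_eq_mul_div, div_pow,
    mul_div_assoc]

lemma exp_neg' (hα : α < 1) (hl : 1 ≤ l) : α - l < 0 := by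
  have : (1:ℝ) ≤ l := by exact_mod_cast hl
  linarith

lemma hf_anti (hα : α < 1) (hl : 1 ≤ l) (hle : Even l) :
    StrictAntiOn (hf α l) (Set.Ioo 0 1) := by
  intro x hx y hy hxy
  rw [hf_eq_left hle, hf_eq_left hle]
  have h1 : y ^ (α - l) < x ^ (α - l) :=
    Real.rpow_lt_rpow_of_neg hx.1 hxy (exp_neg' hα hl)
  have h2 : (1 - y) ^ l < (1 - x) ^ l :=
    pow_lt_pow_left₀ (by linarith [hy.2]) (by linarith [hy.2]) (by omega)
  exact mul_lt_mul' h1.le h2 (pow_nonneg (by linarith [hy.2]) l)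
    (Real.rpow_pos_of_pos hx.1 _)

lemma hf_mono (hα0 : 0 < α) (hl : 1 ≤ l) : StrictMonoOn (hf α l) (Set.Ioi 1) := by
  intro x hx y hy hxy
  have hx1 : (1:ℝ) < x := hx
  have hy1 : (1:ℝ) < y := hy
  rw [hf_eq_right (by linarith), hf_eq_right (by linarith)]
  have h1 : x ^ α < y ^ α := Real.rpow_lt_rpow (by linarith) hxy hα0
  have h2 : ((x - 1) / x) ^ l < ((y - 1) / y) ^ l := by
    apply pow_lt_pow_left₀ _ (div_nonneg (by linarith) (by linarith)) (by omega)
    rw [div_lt_div_iff₀ (by linarith) (by linarith)]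
    nlinarith
  exact mul_lt_mul'' h1 h2 (Real.rpow_nonneg (by linarith) _)
    (pow_nonneg (div_nonneg (by linarith) (by linarith)) _)

lemma hf_contOn {s : Set ℝ} (hs : ∀ x ∈ s, x ≠ 0) : ContinuousOn (hf α l) s := by
  apply ContinuousOn.mul
  · exact continuousOn_id.rpow_const (fun x hx => Or.inl (hs x hx))
  · exact (((continuous_id.sub continuous_const).pow l)).continuousOn

lemma exists_left (hα : α < 1) (hl : 1 ≤ l) (hle : Even l) {c : ℝ} (hc : 0 < c) :
    ∃ x ∈ Set.Ioo (0:ℝ) 1, hf α l x = c := by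
  have hβ : α - l < 0 := exp_neg' hα hl
  set K : ℝ := c * 2 ^ l with hK
  have hK0 : 0 < K := by positivity
  set t : ℝ := min (1/2) (K ^ (1/(α - l))) with htdef
  have ht0 : 0 < t := lt_min (by norm_num) (Real.rpow_pos_of_pos hK0 _)
  have ht1 : t ≤ 1/2 := min_le_left _ _
  have htc : c ≤ hf α l t := by
    have h1 : K ≤ t ^ (α - l) := by
      calc K = (K ^ (1/(α - l))) ^ (α - l) := by
              rw [← Real.rpow_mul hK0.le, one_div_mul_cancel hβ.ne, Real.rpow_one]
        _ ≤ t ^ (α - l) :=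
              Real.rpow_le_rpow_of_nonpos ht0 (min_le_right _ _) hβ.le
    have h2 : (1/2 : ℝ) ^ l ≤ (1 - t) ^ l :=
      pow_le_pow_left₀ (by norm_num) (by linarith) l
    calc c = K * (1/2) ^ l := by
            rw [hK, mul_assoc, ← mul_pow]; norm_num
      _ ≤ t ^ (α - l) * (1 - t) ^ l :=
            mul_le_mul h1 h2 (by positivity) (Real.rpow_nonneg ht0.le _)
      _ = hf α l t := (hf_eq_left hle t).symm
  have hcont : ContinuousOn (hf α l) (Set.Icc t 1) :=
    hf_contOn (fun x hx => by have := hx.1; intro h; rw [h] at this; linarith)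
  have hIVT := intermediate_value_Icc' (by linarith : t ≤ (1:ℝ)) hcont
  have hcmem : c ∈ Set.Icc (hf α l 1) (hf α l t) := by
    rw [hf_one hl]; exact ⟨hc.le, htc⟩
  obtain ⟨x, hx, hxc⟩ := hIVT hcmem
  refine ⟨x, ⟨lt_of_lt_of_le ht0 hx.1, lt_of_le_of_ne hx.2 ?_⟩, hxc⟩
  intro h; rw [h, hf_one hl] at hxc; linarith

lemma exists_right (hα0 : 0 < α) (hl : 1 ≤ l) {c : ℝ} (hc : 0 < c) :
    ∃ x ∈ Set.Ioi (1:ℝ), hf α l x = c := by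
  set K : ℝ := c * 2 ^ l with hK
  have hK0 : 0 < K := by positivity
  set M : ℝ := max 2 (K ^ (1/α)) with hMdef
  have hM2 : (2:ℝ) ≤ M := le_max_left _ _
  have hMc : c ≤ hf α l M := by
    have h1 : K ≤ M ^ α := by
      calc K = (K ^ (1/α)) ^ α := by
              rw [← Real.rpow_mul hK0.le, one_div_mul_cancel hα0.ne', Real.rpow_one]
        _ ≤ M ^ α := Real.rpow_le_rpow (Real.rpow_nonneg hK0.le _)
              (le_max_right _ _) hα0.le
    have h2 : (1/2 : ℝ) ^ l ≤ ((M - 1) / M) ^ l := by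
      apply pow_le_pow_left₀ (by norm_num)
      rw [le_div_iff₀ (by linarith)]; linarith
    calc c = K * (1/2) ^ l := by rw [hK, mul_assoc, ← mul_pow]; norm_num
      _ ≤ M ^ α * ((M - 1) / M) ^ l :=
            mul_le_mul h1 h2 (by positivity) (Real.rpow_nonneg (by linarith) _)
      _ = hf α l M := (hf_eq_right (by linarith)).symm
  have hcont : ContinuousOn (hf α l) (Set.Icc 1 M) :=
    hf_contOn (fun x hx => by have := hx.1; intro h; rw [h] at this; linarith)
  have hIVT := intermediate_value_Icc (by linarith : (1:ℝ) ≤ M) hcont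
  have hcmem : c ∈ Set.Icc (hf α l 1) (hf α l M) := by
    rw [hf_one hl]; exact ⟨hc.le, hMc⟩
  obtain ⟨x, hx, hxc⟩ := hIVT hcmem
  refine ⟨x, lt_of_le_of_ne hx.1 ?_, hxc⟩
  intro h; rw [← h, hf_one hl] at hxc; linarith

open Classical in
noncomputable def xi1 (α : ℝ) (l : ℕ) (c : ℝ) : ℝ :=
  if hc : ∃ x ∈ Set.Ioo (0:ℝ) 1, hf α l x = c then hc.choose else 1/2

open Classical in
noncomputable def xi2 (α : ℝ) (l : ℕ) (c : ℝ) : ℝ :=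
  if hc : ∃ x ∈ Set.Ioi (1:ℝ), hf α l x = c then hc.choose else 2

lemma xi1_spec {c : ℝ} (hc : ∃ x ∈ Set.Ioo (0:ℝ) 1, hf α l x = c) :
    xi1 α l c ∈ Set.Ioo (0:ℝ) 1 ∧ hf α l (xi1 α l c) = c := by
  simp only [xi1]; rw [dif_pos hc]; exact ⟨hc.choose_spec.1, hc.choose_spec.2⟩

lemma xi2_spec {c : ℝ} (hc : ∃ x ∈ Set.Ioi (1:ℝ), hf α l x = c) :
    xi2 α l c ∈ Set.Ioi (1:ℝ) ∧ hf α l (xi2 α l c) = c := by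
  simp only [xi2]; rw [dif_pos hc]; exact ⟨hc.choose_spec.1, hc.choose_spec.2⟩

lemma xi1_tendsto (hα : α ∈ Set.Ioo (0:ℝ) 1) (hl : 1 ≤ l) (hle : Even l) :
    Tendsto (xi1 α l) atTop (nhds 0) := by
  have hmem : ∀ᶠ c in atTop, xi1 α l c ∈ Set.Ioo (0:ℝ) 1 := by
    filter_upwards [eventually_ge_atTop (1:ℝ)] with c hc
    exact (xi1_spec (exists_left hα.2 hl hle (by linarith))).1
  rw [tendsto_order]
  constructor
  · intro a ha
    filter_upwards [hmem] with c hc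
    linarith [hc.1]
  · intro ε hε
    rcases le_or_gt 1 ε with h1 | h1
    · filter_upwards [hmem] with c hc; linarith [hc.2]
    · filter_upwards [eventually_ge_atTop (1:ℝ),
        eventually_ge_atTop (hf α l ε + 1), hmem] with c hc1 hc2 hc3
      by_contra hcon
      push_neg at hcon
      have hspec := (xi1_spec (c := c) (exists_left hα.2 hl hle (by linarith))).2
      have := (hf_anti hα.2 hl hle).antitoneOn ⟨hε, h1⟩ hc3 hcon
      rw [hspec] at this
      linarith

lemma xi2_tendsto (hα : α ∈ Set.Ioo (0:ℝ) 1) (hl : 1 ≤ l) :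
    Tendsto (xi2 α l) atTop atTop := by
  rw [tendsto_atTop]
  intro M
  set M' : ℝ := max 2 M with hM'
  filter_upwards [eventually_ge_atTop (1:ℝ),
    eventually_ge_atTop (hf α l M' + 1)] with c hc1 hc2
  have hspec := xi2_spec (exists_right hα.1 hl (show (0:ℝ) < c by linarith))
  have hgt : M' < xi2 α l c := by
    by_contra hcon
    push_neg at hcon
    have := (hf_mono hα.1 hl).monotoneOn hspec.1
      (show M' ∈ Set.Ioi (1:ℝ) from lt_of_lt_of_le one_lt_two (le_max_left 2 M)) hcon
    rw [hspec.2] at this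
    linarith
  linarith [le_max_right 2 M]

lemma eq_left (hα : α ∈ Set.Ioo (0:ℝ) 1) (hl : 1 ≤ l) (hle : Even l)
    {x c : ℝ} (hx : x ∈ Set.Ioo (0:ℝ) 1) (h : hf α l x = c) :
    x * c ^ ((1:ℝ) / ((l:ℝ) - α)) = (1 - x) ^ ((l:ℝ) / ((l:ℝ) - α)) := by
  have hp : 0 < (l:ℝ) - α := by
    have := exp_neg' hα.2 hl; linarith
  have hx0 := hx.1
  have hx1 := hx.2
  have hc : c = x ^ (α - l) * (1 - x) ^ l := by rw [← h, hf_eq_left hle]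
  rw [hc, Real.mul_rpow (Real.rpow_nonneg hx0.le _) (pow_nonneg (by linarith) _),
    ← Real.rpow_mul hx0.le, ← Real.rpow_natCast (1 - x) l,
    ← Real.rpow_mul (by linarith : (0:ℝ) ≤ 1 - x),
    show (α - l) * (1 / ((l:ℝ) - α)) = -1 by field_simp; ring,
    show (l:ℝ) * (1 / ((l:ℝ) - α)) = (l:ℝ) / ((l:ℝ) - α) by ring,
    Real.rpow_neg_one, ← mul_assoc, mul_inv_cancel₀ hx0.ne', one_mul]

lemma eq_right (hα : α ∈ Set.Ioo (0:ℝ) 1) (hl : 1 ≤ l)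
    {x c : ℝ} (hx : 1 < x) (h : hf α l x = c) :
    x * c ^ (-(1:ℝ) / α) = (x / (x - 1)) ^ ((l:ℝ) / α) := by
  have hα0 := hα.1
  have hx0 : (0:ℝ) < x := by linarith
  have hx1 : (0:ℝ) < x - 1 := by linarith
  have hc : c = x ^ α * ((x - 1) / x) ^ l := by rw [← h, hf_eq_right hx0]
  rw [hc, Real.mul_rpow (Real.rpow_nonneg hx0.le _) (pow_nonneg (by positivity) _),
    ← Real.rpow_mul hx0.le, ← Real.rpow_natCast ((x-1)/x) l,
    ← Real.rpow_mul (by positivity : (0:ℝ) ≤ (x-1)/x),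
    show α * (-(1:ℝ) / α) = -1 by field_simp,
    show (l:ℝ) * (-(1:ℝ) / α) = -((l:ℝ) / α) by ring,
    Real.rpow_neg_one, Real.rpow_neg (by positivity), ← Real.inv_rpow (by positivity),
    inv_div, ← mul_assoc, mul_inv_cancel₀ hx0.ne', one_mul]

end aux

/-- For `α ∈ (0,1)` and even integer `l ≥ 1`, the equation `x^(α-l)(x-1)^l = c` has,
for all sufficiently large `c > 0`, exactly two positive real solutions `ξ₁(c) ∈ (0,1)`
and `ξ₂(c) ∈ (1,∞)`, with `ξ₁(c) ~ c^(-1/(l-α))` and `ξ₂(c) ~ c^(1/α)` as `c → ∞`. -/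
theorem stmt4 (α : ℝ) (hα : α ∈ Set.Ioo (0 : ℝ) 1) (l : ℕ) (hl : 1 ≤ l) (hle : Even l) :
    ∃ c₀ > (0 : ℝ), ∃ ξ₁ ξ₂ : ℝ → ℝ,
      (∀ c ≥ c₀,
        ξ₁ c ∈ Set.Ioo (0 : ℝ) 1 ∧ ξ₂ c ∈ Set.Ioi (1 : ℝ) ∧
        (ξ₁ c) ^ (α - l) * (ξ₁ c - 1) ^ l = c ∧
        (ξ₂ c) ^ (α - l) * (ξ₂ c - 1) ^ l = c ∧
        ∀ x : ℝ, 0 < x → x ^ (α - l) * (x - 1) ^ l = c → x = ξ₁ c ∨ x = ξ₂ c) ∧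
      Tendsto (fun c : ℝ => ξ₁ c * c ^ ((1 : ℝ) / ((l : ℝ) - α))) atTop (nhds 1) ∧
      Tendsto (fun c : ℝ => ξ₂ c * c ^ (-(1 : ℝ) / α)) atTop (nhds 1) := by
  refine ⟨1, one_pos, xi1 α l, xi2 α l, ?_, ?_, ?_⟩
  · intro c hc
    have hc0 : (0:ℝ) < c := by linarith
    have h1 := xi1_spec (exists_left hα.2 hl hle hc0)
    have h2 := xi2_spec (exists_right hα.1 hl hc0)
    refine ⟨h1.1, h2.1, h1.2, h2.2, ?_⟩
    intro x hx hxc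
    have hx1 : x ≠ 1 := by
      intro h; rw [h] at hxc
      have h0 : (1:ℝ) ^ (α - l) * ((1:ℝ) - 1) ^ l = 0 := hf_one hl
      rw [h0] at hxc; linarith
    rcases lt_or_gt_of_ne hx1 with h | h
    · left
      exact (hf_anti hα.2 hl hle).injOn ⟨hx, h⟩ h1.1
        (show hf α l x = hf α l (xi1 α l c) from hxc.trans h1.2.symm)
    · right
      exact (hf_mono hα.1 hl).injOn h h2.1
        (show hf α l x = hf α l (xi2 α l c) from hxc.trans h2.2.symm)
  · have h0 : Tendsto (fun c => 1 - xi1 α l c) atTop (nhds 1) := by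
      simpa using tendsto_const_nhds.sub (xi1_tendsto hα hl hle)
    have h1 : Tendsto (fun c => (1 - xi1 α l c) ^ ((l:ℝ) / ((l:ℝ) - α)))
        atTop (nhds 1) := by
      simpa using h0.rpow_const (Or.inl one_ne_zero)
    apply h1.congr'
    filter_upwards [eventually_ge_atTop (1:ℝ)] with c hc
    exact (eq_left hα hl hle (xi1_spec (exists_left hα.2 hl hle (by linarith))).1
      (xi1_spec (exists_left hα.2 hl hle (by linarith))).2).symm
  · have hdiv : Tendsto (fun x : ℝ => x / (x - 1)) atTop (nhds 1) := by
      have ht : Tendsto (fun x : ℝ => x - 1) atTop atTop :=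
        tendsto_atTop_add_const_right atTop (-1) tendsto_id
      have ha : Tendsto (fun x : ℝ => (x - 1)⁻¹) atTop (nhds 0) :=
        tendsto_inv_atTop_zero.comp ht
      have h0 : Tendsto (fun x : ℝ => 1 + (x - 1)⁻¹) atTop (nhds 1) := by
        simpa using ha.const_add (1:ℝ)
      apply h0.congr'
      filter_upwards [eventually_ge_atTop (2:ℝ)] with x hx
      have hne : x - 1 ≠ 0 := by intro h; linarith [h]
      field_simp; ring
    have h1 : Tendsto (fun c => (xi2 α l c / (xi2 α l c - 1)) ^ ((l:ℝ) / α))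
        atTop (nhds 1) := by
      have := (hdiv.comp (xi2_tendsto hα hl)).rpow_const
        (p := (l:ℝ) / α) (Or.inl one_ne_zero)
      simpa [Function.comp] using this
    apply h1.congr'
    filter_upwards [eventually_ge_atTop (1:ℝ)] with c hc
    exact (eq_right hα hl (xi2_spec (exists_right hα.1 hl (by linarith))).1
      (xi2_spec (exists_right hα.1 hl (by linarith))).2).symm
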